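/- arXiv:2104.10374 — 4 statements merged into one kernel-verified Lean document; each statement's English description precedes it below -/
import Mathlib

section
/- The map Pl_w sending the class of a rank-d matrix A ∈ M_d(n,d) to the point [det(A_{λ⁰}) : ... : det(A_{λ^m})] in WP(c₀,...,c_m) is well defined and injective. -/
/-! The minors of `D A T` are those of `A` scaled by `det T = t ^ a` and by the diagonal entries
of `D`. Conversely, with `A' := D A` the Plücker coordinates of `B` are `t ^ a` times those of
`A'`, first on increasing row selections and then, by alternation, on all of them. Since
`rank A = d`, some minor `M = A'_f` is nonzero. By Cramer's rule, `A' * adj M` and `B * adj B_f`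
have as entries the minors of `A'` and `B` with one row of `f` replaced, so the second is `t ^ a`
times the first; this forces `B = A' (M⁻¹ B_f)`, and `det (M⁻¹ B_f) = t ^ a`. -/

open Function

namespace Matrix

variable {m ι R K : Type*}

theorem det_submatrix_mul [Fintype ι] [DecidableEq ι] [CommRing R] (A : Matrix m ι R)
    (T : Matrix ι ι R) (f : ι → m) :
    ((A * T).submatrix f id).det = (A.submatrix f id).det * T.det := by
  rw [submatrix_mul A T f id id bijective_id, submatrix_id_id, det_mul]

theorem det_submatrix_diagonal_mul [Fintype ι] [DecidableEq ι] [DecidableEq m] [Fintype m]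
    [CommRing R] (w : m → R) (A : Matrix m ι R) (f : ι → m) :
    ((diagonal w * A).submatrix f id).det = (∏ k, w (f k)) * (A.submatrix f id).det := by
  have : (diagonal w * A).submatrix f id = diagonal (w ∘ f) * A.submatrix f id := by
    ext i j
    simp
  rw [this, det_mul, det_diagonal, comp_def]

theorem mul_adjugate_submatrix_apply [Fintype ι] [DecidableEq ι] [CommRing R]
    (A : Matrix m ι R) (f : ι → m) (r : m) (k : ι) :
    (A * adjugate (A.submatrix f id)) r k = (A.submatrix (update f k r) id).det := by
  have hrow : (A.submatrix f id).updateRow k (A r) = A.submatrix (update f k r) id := by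
    ext i j
    by_cases hi : i = k
    · subst hi; simp
    · simp [hi]
  rw [← hrow, ← cramer_transpose_apply, cramer_eq_adjugate_mulVec, ← adjugate_transpose,
    mulVec_transpose]
  rfl

theorem det_submatrix_eq_mul_of_strictMono {n : ℕ} [LinearOrder m] [CommRing R]
    {A B : Matrix m (Fin n) R} {c : R}
    (h : ∀ g : Fin n → m, StrictMono g → (B.submatrix g id).det = c * (A.submatrix g id).det)
    (f : Fin n → m) : (B.submatrix f id).det = c * (A.submatrix f id).det := by
  by_cases hf : Injective f
  · set σ := Tuple.sort f
    have hsorted : StrictMono (f ∘ σ) :=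
      (Tuple.monotone_sort f).strictMono_of_injective (hf.comp σ.injective)
    have hsign : ∀ M : Matrix m (Fin n) R,
        (M.submatrix f id).det = Equiv.Perm.sign σ⁻¹ * (M.submatrix (f ∘ σ) id).det := by
      intro M
      rw [← det_permute, submatrix_submatrix, comp_assoc]
      simp
    rw [hsign A, hsign B, h _ hsorted]
    ring
  · obtain ⟨i, j, hfij, hij⟩ := not_injective_iff.mp hf
    have hzero : ∀ M : Matrix m (Fin n) R, (M.submatrix f id).det = 0 := fun M =>
      det_zero_of_row_eq hij (by ext; simp [hfij])
    rw [hzero A, hzero B, mul_zero]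

theorem exists_det_submatrix_ne_zero [Fintype ι] [DecidableEq ι] [Finite m] [Field K]
    {A : Matrix m ι K} (hA : A.rank = Fintype.card ι) :
    ∃ f : ι → m, (A.submatrix f id).det ≠ 0 := by
  obtain ⟨κ, s, hs, hspan, hli⟩ := exists_linearIndependent' K A.row
  have : Finite κ := Finite.of_injective s hs
  have : Fintype κ := Fintype.ofFinite κ
  have hcard : Fintype.card κ = Fintype.card ι := by
    rw [← finrank_span_eq_card hli, hspan, ← rank_eq_finrank_span_row, hA]
  let e : ι ≃ κ := Fintype.equivOfCardEq hcard.symm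
  refine ⟨s ∘ e, ?_⟩
  have hrows : LinearIndependent K (A.submatrix (s ∘ e) id).row := hli.comp e e.injective
  exact ((isUnit_iff_isUnit_det _).mp (linearIndependent_rows_iff_isUnit.mp hrows)).ne_zero

theorem exists_eq_mul_of_det_submatrix_eq_mul [Fintype ι] [DecidableEq ι] [Field K]
    {A B : Matrix m ι K} {c : K} (hc : c ≠ 0) {f : ι → m} (hf : (A.submatrix f id).det ≠ 0)
    (h : ∀ g : ι → m, (B.submatrix g id).det = c * (A.submatrix g id).det) :
    ∃ T : Matrix ι ι K, T.det = c ∧ B = A * T := by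
  set M := A.submatrix f id
  set N := B.submatrix f id
  have hN : N.det = c * M.det := h f
  have hadj : B * adjugate N = c • (A * adjugate M) := by
    ext r k
    simp only [mul_adjugate_submatrix_apply, h, smul_apply, smul_eq_mul, M, N]
  have hB : M.det • B = A * (adjugate M * N) := by
    apply smul_right_injective _ hc
    calc c • M.det • B = B * (adjugate N * N) := by
          rw [adjugate_mul, Matrix.mul_smul, Matrix.mul_one, hN, smul_smul]
      _ = c • (A * (adjugate M * N)) := by
          rw [← Matrix.mul_assoc, hadj, smul_mul, Matrix.mul_assoc]
  refine ⟨M⁻¹ * N, ?_, ?_⟩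
  · rw [det_mul, det_nonsing_inv, hN, Ring.inverse_eq_inv']
    field_simp
  · rw [inv_def, Matrix.smul_mul, Matrix.mul_smul, ← hB, smul_smul, Ring.inverse_eq_inv',
      inv_mul_cancel₀ hf, one_smul]

end Matrix

theorem pluecker_well_defined_and_injective_general
    (n d a : ℕ) (W : Fin n → ℕ)
    (m : ℕ) (lam : Fin (m + 1) → Fin d → Fin n)
    (henum : ∀ f : Fin d → Fin n, StrictMono f → ∃! i, lam i = f)
    (A B : Matrix (Fin n) (Fin d) ℂ) (hA : A.rank = d) :
    (∃ (T : Matrix (Fin d) (Fin d) ℂ) (t : ℂ), t ≠ 0 ∧ t ^ a = T.det ∧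
        B = Matrix.diagonal (fun i => t ^ (W i)) * A * T) ↔
    (∃ t : ℂ, t ≠ 0 ∧ ∀ i, (B.submatrix (lam i) id).det =
        t ^ (a + ∑ q, W (lam i q)) * (A.submatrix (lam i) id).det) := by
  have hDA : ∀ (t : ℂ) (f : Fin d → Fin n),
      ((Matrix.diagonal (fun i => t ^ W i) * A).submatrix f id).det
        = t ^ (∑ q, W (f q)) * (A.submatrix f id).det := fun t f => by
    rw [Matrix.det_submatrix_diagonal_mul, Finset.prod_pow_eq_pow_sum]
  constructor
  · rintro ⟨T, t, ht, hT, rfl⟩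
    refine ⟨t, ht, fun i => ?_⟩
    rw [Matrix.det_submatrix_mul, hDA, ← hT, pow_add]
    ring
  · rintro ⟨t, ht, hminors⟩
    have hsorted : ∀ f : Fin d → Fin n, StrictMono f → (B.submatrix f id).det
        = t ^ a * ((Matrix.diagonal (fun i => t ^ W i) * A).submatrix f id).det := by
      intro f hf
      obtain ⟨i, rfl, -⟩ := henum f hf
      rw [hminors, hDA, pow_add, mul_assoc]
    obtain ⟨f, hf⟩ := Matrix.exists_det_submatrix_ne_zero (hA.trans (Fintype.card_fin d).symm)
    obtain ⟨T, hT, rfl⟩ := Matrix.exists_eq_mul_of_det_submatrix_eq_mul (pow_ne_zero a ht)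
      (f := f) (by rw [hDA]; exact mul_ne_zero (pow_ne_zero _ ht) hf)
      (Matrix.det_submatrix_eq_mul_of_strictMono hsorted)
    exact ⟨T, t, ht, hT.symm, rfl⟩

/-- The weighted Plücker map, sending the class of a rank-`d` matrix
`A ∈ M_d(n,d)` to `[det(A_{λ⁰}) : ⋯ : det(A_{λ^m})] ∈ WP(c₀,...,c_m)`, is well
defined and injective: two rank-`d` matrices are equivalent in `WGr(d,n)`
(`B = D A T` with `T ∈ GL(d,ℂ)`, `t^a = det T`, `D = diag(t^{w₁},...,t^{w_n})`)
iff their Plücker vectors are equivalent under the weighted `ℂ*`-action with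
weights `cᵢ = a + Σⱼ w_{λⁱⱼ}`. -/
theorem pluecker_well_defined_and_injective
    (n d a : ℕ) (hd : 0 < d) (hdn : d < n) (ha : 0 < a) (W : Fin n → ℕ)
    (m : ℕ) (lam : Fin (m + 1) → Fin d → Fin n)
    (hmono : ∀ i, StrictMono (lam i))
    (henum : ∀ f : Fin d → Fin n, StrictMono f → ∃! i, lam i = f)
    (A B : Matrix (Fin n) (Fin d) ℂ) (hA : A.rank = d) (hB : B.rank = d) :
    (∃ (T : Matrix (Fin d) (Fin d) ℂ) (t : ℂ), t ≠ 0 ∧ t ^ a = T.det ∧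
        B = Matrix.diagonal (fun i => t ^ (W i)) * A * T) ↔
    (∃ t : ℂ, t ≠ 0 ∧ ∀ i, (B.submatrix (lam i) id).det =
        t ^ (a + ∑ q, W (lam i q)) * (A.submatrix (lam i) id).det) :=
  pluecker_well_defined_and_injective_general n d a W m lam henum A B hA
end

section
/- Suppose WGr(d,n) is divisive with respect to the identity permutation, i.e., cᵢ divides c_{i−1} for all i. Let λⁱ be a Schubert symbol, (λ_l, k) a reversal of λⁱ with resulting symbol λʲ = (λ_l, k)λⁱ. Then λʲ < λⁱ in the total order and cⱼ − cᵢ = w_{λ_l} − w_k, so that cᵢ divides cⱼ. -/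
open Finset

lemma down_mem_iff {d : ℕ} (P : Finset (Fin d))
    (hP : ∀ p p' : Fin d, p' ≤ p → p ∈ P → p' ∈ P) (q : Fin d) :
    q ∈ P ↔ (q : ℕ) < P.card := by
  constructor
  · intro hq
    have hsub : Finset.Iic q ⊆ P := fun p hp => hP q p (Finset.mem_Iic.mp hp) hq
    have := Finset.card_le_card hsub
    rw [Fin.card_Iic] at this
    omega
  · intro h
    by_contra hq
    have hsub : P ⊆ Finset.Iio q := by
      intro p hp
      rw [Finset.mem_Iio]
      by_contra hpq
      exact hq (hP p q (le_of_not_gt hpq) hp)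
    have := Finset.card_le_card hsub
    rw [Fin.card_Iio] at this
    omega

lemma strictMono_le_iff_card {d n : ℕ} (f : Fin d → Fin n) (hf : StrictMono f)
    (q : Fin d) (v : Fin n) :
    f q ≤ v ↔ (q : ℕ) < ((Finset.univ.image f).filter (fun x => x ≤ v)).card := by
  rw [Finset.filter_image, Finset.card_image_of_injective _ hf.injective]
  have := down_mem_iff (Finset.univ.filter (fun p => f p ≤ v))
    (fun p p' hle hp => by
      simp only [Finset.mem_filter, Finset.mem_univ, true_and] at *
      exact le_trans (hf.monotone hle) hp) q
  simpa using this

/-- Suppose `WGr(d,n)` is divisive with respect to the identity permutation,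
i.e. `cᵢ ∣ c_{i-1}` for all `i`, where `cᵢ = a + Σ_q w_{λⁱ_q}` and the
enumeration `λ⁰ < ⋯ < λ^m` refines the componentwise partial order `⪯`.
If `(λⁱ_{l₀}, k')` is a reversal of `λⁱ` and `λʲ = (λⁱ_{l₀}, k')λⁱ`, then
`j < i` in the total order, `cᵢ - cⱼ = w_{λⁱ_{l₀}} - w_{k'}`, and `cᵢ ∣ cⱼ`. -/
theorem divisive_reversal_divides
    (n d a m : ℕ) (hd : 0 < d) (hdn : d < n) (ha : 0 < a) (W : Fin n → ℕ)
    (lam : Fin (m + 1) → Fin d → Fin n) (hmono : ∀ r, StrictMono (lam r))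
    (henum : ∀ f : Fin d → Fin n, StrictMono f → ∃! r, lam r = f)
    (horder : ∀ r s : Fin (m + 1), (∀ q, lam r q ≤ lam s q) → lam r ≠ lam s → r < s)
    (c : Fin (m + 1) → ℕ) (hc : ∀ r, c r = a + ∑ q, W (lam r q))
    (hdiv : ∀ r : Fin m, c r.succ ∣ c r.castSucc)
    (i j : Fin (m + 1)) (l0 : Fin d) (k' : Fin n)
    (hk' : k' ∉ Set.range (lam i)) (hlt : k' < lam i l0)
    (hrange : Set.range (lam j) = insert k' (Set.range (lam i) \ {lam i l0})) :
    j < i ∧ (c i : ℤ) - c j = (W (lam i l0) : ℤ) - W k' ∧ c i ∣ c j := by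
  classical
  set x0 := lam i l0 with hx0
  set S : Finset (Fin n) := Finset.univ.image (lam i) with hS
  set T : Finset (Fin n) := Finset.univ.image (lam j) with hT
  have hScoe : (S : Set (Fin n)) = Set.range (lam i) := by
    rw [hS, Finset.coe_image, Finset.coe_univ, Set.image_univ]
  have hTcoe : (T : Set (Fin n)) = Set.range (lam j) := by
    rw [hT, Finset.coe_image, Finset.coe_univ, Set.image_univ]
  have hTS : T = insert k' (S.erase x0) := by
    apply Finset.coe_injective
    rw [hTcoe, hrange, Finset.coe_insert, Finset.erase_eq, Finset.coe_sdiff,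
      Finset.coe_singleton, hScoe]
  have hx0S : x0 ∈ S := by
    rw [hS]; exact Finset.mem_image_of_mem _ (Finset.mem_univ l0)
  have hk'S : k' ∉ S := by
    rw [← Finset.mem_coe, hScoe]; exact hk'
  -- counting inequality
  have hcount : ∀ v : Fin n,
      (S.filter (fun x => x ≤ v)).card ≤ (T.filter (fun x => x ≤ v)).card := by
    intro v
    rw [hTS, Finset.filter_insert, Finset.filter_erase]
    by_cases hx0v : x0 ≤ v
    · have hk'v : k' ≤ v := le_of_lt (lt_of_lt_of_le hlt hx0v)
      rw [if_pos hk'v]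
      have hx0f : x0 ∈ S.filter (fun x => x ≤ v) := Finset.mem_filter.mpr ⟨hx0S, hx0v⟩
      have hk'f : k' ∉ (S.filter (fun x => x ≤ v)).erase x0 := fun h =>
        hk'S (Finset.mem_filter.mp (Finset.mem_of_mem_erase h)).1
      rw [Finset.card_insert_of_notMem hk'f, Finset.card_erase_of_mem hx0f]
      have : 1 ≤ (S.filter (fun x => x ≤ v)).card := Finset.card_pos.mpr ⟨x0, hx0f⟩
      omega
    · have hx0f : x0 ∉ S.filter (fun x => x ≤ v) := fun h =>
        hx0v (Finset.mem_filter.mp h).2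
      rw [Finset.erase_eq_of_notMem hx0f]
      split_ifs with hk'v
      · have hk'f : k' ∉ S.filter (fun x => x ≤ v) := fun h =>
          hk'S (Finset.mem_filter.mp h).1
        rw [Finset.card_insert_of_notMem hk'f]
        omega
      · exact le_refl _
  -- componentwise comparison
  have hle : ∀ q, lam j q ≤ lam i q := by
    intro q
    rw [strictMono_le_iff_card _ (hmono j)]
    exact lt_of_lt_of_le
      ((strictMono_le_iff_card _ (hmono i) q (lam i q)).mp (le_refl _)) (hcount _)
  have hne : lam j ≠ lam i := by
    intro h
    apply hk'S
    rw [← Finset.mem_coe, hScoe, ← h, ← hTcoe, hTS]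
    exact Finset.mem_insert_self _ _
  have hji : j < i := horder j i hle hne
  -- sums
  have hsumi : ∑ q, W (lam i q) = ∑ x ∈ S, W x :=
    (Finset.sum_image (fun x _ y _ h => (hmono i).injective h)).symm
  have hsumj : ∑ q, W (lam j q) = ∑ x ∈ T, W x :=
    (Finset.sum_image (fun x _ y _ h => (hmono j).injective h)).symm
  have hk'T : k' ∉ S.erase x0 := fun h => hk'S (Finset.mem_of_mem_erase h)
  have hsumT : ∑ x ∈ T, W x + W x0 = W k' + ∑ x ∈ S, W x := by
    rw [hTS, Finset.sum_insert hk'T, add_assoc, Finset.sum_erase_add _ _ hx0S]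
  have hci : c i = a + ∑ x ∈ S, W x := by rw [hc, hsumi]
  have hcj : c j = a + ∑ x ∈ T, W x := by rw [hc, hsumj]
  have hdiff : (c i : ℤ) - c j = (W x0 : ℤ) - W k' := by
    have : (∑ x ∈ T, W x : ℤ) + W x0 = W k' + ∑ x ∈ S, W x := by
      exact_mod_cast congrArg (Nat.cast : ℕ → ℤ) hsumT
    rw [hci, hcj]
    push_cast
    linarith
  refine ⟨hji, hdiff, ?_⟩
  -- chain divisibility
  have hchain : ∀ q p (hq : q < m + 1) (hp : p < m + 1), p ≤ q →
      c ⟨q, hq⟩ ∣ c ⟨p, hp⟩ := by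
    intro q
    induction q with
    | zero => intro p _ _ hpq; interval_cases p; exact dvd_refl _
    | succ q ih =>
      intro p hq hp hpq
      rcases Nat.lt_or_ge p (q+1) with h | h
      · have hstep : c ⟨q+1, hq⟩ ∣ c ⟨q, by omega⟩ := by
          have := hdiv ⟨q, by omega⟩
          simpa [Fin.succ, Fin.castSucc, Fin.castAdd, Fin.castLE] using this
        exact dvd_trans hstep (ih p (by omega) hp (by omega))
      · have : p = q + 1 := le_antisymm hpq h
        subst this
        exact dvd_refl _
  have := hchain (i : ℕ) (j : ℕ) i.isLt j.isLt (le_of_lt hji)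
  simpa using this
end

section
/- Let λⁱ and λʲ be Schubert symbols with |λⁱ ∩ λʲ| = d − 1 and λʲ ≺ λⁱ. In H²(BT^n;ℤ) ≅ ℤ^n with basis y₁,...,y_n, writing Y_λ = Σ_{k∈λ} y_k, the classes Y_{λʲ} − d_{ij} Y_{λⁱ} for distinct such pairs (i,j) with fixed i are pairwise non-proportional, provided the integers d_{ij} ≥ 1 (pairwise coprimality of the Euler classes up to these linear forms). -/
/-- The indicator linear form `Y_λ = Σ_{k ∈ λ} y_k`, viewed as a vector in `ℤ^n`. -/
def Yform (n d : ℕ) (f : Fin d → Fin n) : Fin n → ℤ :=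
  fun k => if k ∈ Finset.image f Finset.univ then 1 else 0

lemma strictMono_image_inj {n d : ℕ} {f g : Fin d → Fin n} (hf : StrictMono f)
    (hg : StrictMono g) (h : Finset.image f Finset.univ = Finset.image g Finset.univ) :
    f = g := by
  have hcf : (Finset.image f Finset.univ).card = d := by
    rw [Finset.card_image_of_injective _ hf.injective, Finset.card_univ, Fintype.card_fin]
  have h1 : f = (Finset.image f Finset.univ).orderEmbOfFin hcf :=
    Finset.orderEmbOfFin_unique hcf (fun x => Finset.mem_image_of_mem f (Finset.mem_univ x)) hf
  have h2 : g = (Finset.image f Finset.univ).orderEmbOfFin hcf :=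
    Finset.orderEmbOfFin_unique hcf
      (fun x => h ▸ Finset.mem_image_of_mem g (Finset.mem_univ x)) hg
  rw [h1, h2]

lemma key_nonprop (n d : ℕ) (hd : 0 < d)
    (li lj lj' : Fin d → Fin n)
    (hi : StrictMono li) (hj : StrictMono lj) (hj' : StrictMono lj')
    (hne : lj ≠ lj')
    (hcard : ((Finset.image li Finset.univ) ∩ (Finset.image lj Finset.univ)).card = d - 1)
    (hcard' : ((Finset.image li Finset.univ) ∩ (Finset.image lj' Finset.univ)).card = d - 1)
    (dij dij' : ℤ) (hdij : 1 ≤ dij) (hdij' : 1 ≤ dij') :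
    ∀ r : ℤ, Yform n d lj' - dij' • Yform n d li ≠ r • (Yform n d lj - dij • Yform n d li) := by
  intro r h
  set A := Finset.image li Finset.univ with hA
  set B := Finset.image lj Finset.univ with hB
  set B' := Finset.image lj' Finset.univ with hB'
  have cardA : A.card = d := by
    rw [hA, Finset.card_image_of_injective _ hi.injective, Finset.card_univ, Fintype.card_fin]
  have cardB : B.card = d := by
    rw [hB, Finset.card_image_of_injective _ hj.injective, Finset.card_univ, Fintype.card_fin]
  have cardB' : B'.card = d := by
    rw [hB', Finset.card_image_of_injective _ hj'.injective, Finset.card_univ, Fintype.card_fin]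
  -- singletons
  have hBA : (B \ A).card = 1 := by
    have h1 := Finset.card_inter_add_card_sdiff B A
    rw [Finset.inter_comm] at h1
    omega
  have hAB : (A \ B).card = 1 := by
    have h1 := Finset.card_inter_add_card_sdiff A B
    omega
  have hB'A : (B' \ A).card = 1 := by
    have h1 := Finset.card_inter_add_card_sdiff B' A
    rw [Finset.inter_comm] at h1
    omega
  have hAB' : (A \ B').card = 1 := by
    have h1 := Finset.card_inter_add_card_sdiff A B'
    omega
  obtain ⟨b, hb⟩ := Finset.card_eq_one.mp hBA
  obtain ⟨a, ha⟩ := Finset.card_eq_one.mp hAB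
  obtain ⟨b', hb'⟩ := Finset.card_eq_one.mp hB'A
  obtain ⟨a', ha'⟩ := Finset.card_eq_one.mp hAB'
  have hbB : b ∈ B := (Finset.mem_sdiff.mp (hb ▸ Finset.mem_singleton_self b)).1
  have hbA : b ∉ A := (Finset.mem_sdiff.mp (hb ▸ Finset.mem_singleton_self b)).2
  have hb'B' : b' ∈ B' := (Finset.mem_sdiff.mp (hb' ▸ Finset.mem_singleton_self b')).1
  have hb'A : b' ∉ A := (Finset.mem_sdiff.mp (hb' ▸ Finset.mem_singleton_self b')).2
  have haA : a ∈ A := (Finset.mem_sdiff.mp (ha ▸ Finset.mem_singleton_self a)).1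
  have haB : a ∉ B := (Finset.mem_sdiff.mp (ha ▸ Finset.mem_singleton_self a)).2
  have ha'A : a' ∈ A := (Finset.mem_sdiff.mp (ha' ▸ Finset.mem_singleton_self a')).1
  have ha'B' : a' ∉ B' := (Finset.mem_sdiff.mp (ha' ▸ Finset.mem_singleton_self a')).2
  have heval : ∀ k : Fin n,
      (if k ∈ B' then (1:ℤ) else 0) - dij' * (if k ∈ A then 1 else 0)
        = r * ((if k ∈ B then (1:ℤ) else 0) - dij * (if k ∈ A then 1 else 0)) := by
    intro k
    have := congrFun h k
    simpa [Yform, hA, hB, hB', Pi.sub_apply, smul_eq_mul] using this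
  -- eval at b : get r = 1 and b ∈ B'
  have hr : r = 1 ∧ b ∈ B' := by
    have h1 := heval b
    rw [if_pos hbB, if_neg hbA] at h1
    by_cases hbB' : b ∈ B'
    · rw [if_pos hbB'] at h1
      constructor
      · linarith [h1]
      · exact hbB'
    · exfalso
      rw [if_neg hbB'] at h1
      have hr0 : r = 0 := by linarith
      have h2 := heval b'
      rw [if_pos hb'B', if_neg hb'A, hr0] at h2
      simp at h2
  obtain ⟨hr1, hbB'⟩ := hr
  -- b = b'
  have hbb' : b = b' := by
    have : b ∈ B' \ A := Finset.mem_sdiff.mpr ⟨hbB', hbA⟩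
    rw [hb'] at this
    exact Finset.mem_singleton.mp this
  -- a ≠ a'
  have haa' : a ≠ a' := by
    intro heq
    apply hne
    apply strictMono_image_inj hj hj'
    have hBeq : B = (A ∩ B) ∪ (B \ A) := by
      ext x; simp only [Finset.mem_union, Finset.mem_inter, Finset.mem_sdiff]; tauto
    have hB'eq : B' = (A ∩ B') ∪ (B' \ A) := by
      ext x; simp only [Finset.mem_union, Finset.mem_inter, Finset.mem_sdiff]; tauto
    have hIB : A ∩ B = A \ {a} := by rw [← ha, Finset.sdiff_sdiff_self_left]
    have hIB' : A ∩ B' = A \ {a'} := by rw [← ha', Finset.sdiff_sdiff_self_left]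
    rw [← hB, ← hB', hBeq, hB'eq, hIB, hIB', hb, hb', heq, hbb']
  have ha'B : a' ∈ B := by
    by_contra hc
    have : a' ∈ A \ B := Finset.mem_sdiff.mpr ⟨ha'A, hc⟩
    rw [ha] at this
    exact haa' (Finset.mem_singleton.mp this).symm
  have haB' : a ∈ B' := by
    by_contra hc
    have : a ∈ A \ B' := Finset.mem_sdiff.mpr ⟨haA, hc⟩
    rw [ha'] at this
    exact haa' (Finset.mem_singleton.mp this)
  have e1 := heval a
  rw [if_pos haB', if_neg haB, if_pos haA, hr1] at e1
  have e2 := heval a'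
  rw [if_neg ha'B', if_pos ha'B, if_pos ha'A, hr1] at e2
  linarith

/-- Let `λⁱ` be a Schubert symbol and `λʲ ≠ λʲ'` two distinct Schubert symbols
with `λʲ, λʲ' ≺ λⁱ` and `|λⁱ ∩ λʲ| = |λⁱ ∩ λʲ'| = d - 1`.  For integers
`d_{ij}, d_{ij'} ≥ 1`, the linear forms `Y_{λʲ} - d_{ij} Y_{λⁱ}` and
`Y_{λʲ'} - d_{ij'} Y_{λⁱ}` are non-proportional: neither is an integer scalar
multiple of the other. -/
theorem euler_class_forms_nonproportional (n d : ℕ) (hd : 0 < d) (hdn : d < n)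
    (li lj lj' : Fin d → Fin n)
    (hi : StrictMono li) (hj : StrictMono lj) (hj' : StrictMono lj')
    (hne : lj ≠ lj')
    (hjle : ∀ q, lj q ≤ li q) (hjne : lj ≠ li)
    (hj'le : ∀ q, lj' q ≤ li q) (hj'ne : lj' ≠ li)
    (hcard : ((Finset.image li Finset.univ) ∩ (Finset.image lj Finset.univ)).card = d - 1)
    (hcard' : ((Finset.image li Finset.univ) ∩ (Finset.image lj' Finset.univ)).card = d - 1)
    (dij dij' : ℤ) (hdij : 1 ≤ dij) (hdij' : 1 ≤ dij') :
    (∀ r : ℤ, Yform n d lj' - dij' • Yform n d li ≠ r • (Yform n d lj - dij • Yform n d li)) ∧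
    (∀ r : ℤ, Yform n d lj - dij • Yform n d li ≠ r • (Yform n d lj' - dij' • Yform n d li)) := by
  exact ⟨key_nonprop n d hd li lj lj' hi hj hj' hne hcard hcard' dij dij' hdij hdij',
         key_nonprop n d hd li lj' lj hi hj' hj hne.symm hcard' hcard dij' dij hdij' hdij⟩
end

section
/- For each Schubert symbol λⁱ there is at most one equivariant Schubert class corresponding to λⁱ: if x and x' both satisfy (1) support above λⁱ, (2) x|_{λⁱ} = Π_{λʲ∈R(λⁱ)}(Y_{λʲ} − (cⱼ/cᵢ)Y_{λⁱ}), and (3) each restriction x|_{λ^k} is homogeneous of degree ℓ(λⁱ), then x = x'. -/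
open MvPolynomial

/-- `Y_{λ^r} = Σ_q y_{λ^r_q}` as a polynomial in `ℤ[y₁,...,y_n]`. -/
noncomputable def Ypoly (n d m : ℕ) (lam : Fin (m + 1) → Fin d → Fin n) (r : Fin (m + 1)) :
    MvPolynomial (Fin n) ℤ :=
  ∑ q, MvPolynomial.X (lam r q)

/-- `λʲ ∈ R(λⁱ)`: `λʲ` is obtained from `λⁱ` by a reversal `(k, k')`. -/
def inRev (n d m : ℕ) (lam : Fin (m + 1) → Fin d → Fin n) (i j : Fin (m + 1)) : Prop :=
  ∃ k k' : Fin n, k ∈ Set.range (lam i) ∧ k' ∉ Set.range (lam i) ∧ k' < k ∧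
    Set.range (lam j) = insert k' (Set.range (lam i) \ {k})

/-!
Put `y = x - x'`; it is again a GKM class, homogeneous of degree `ℓ(λ^{i₀})`, vanishing at
`λ^{i₀}` and supported above it. Suppose `y` vanishes at every `λʲ` with `j < k`. Each of the
`ℓ(λᵏ)` reversals `(b, B)` of `λᵏ` (`b ∉ λᵏ`, `B ∈ λᵏ`, `b < B`) leads to a Schubert symbol
`λʲ = λᵏ - B + b` with `j < k`, so the GKM condition on that edge makes the linear form
`Y_{λʲ} - γ Y_{λᵏ} = y_b + (terms without y_b)` divide `y_k`. These forms are pairwise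
non-associated primes, so their product, of degree `ℓ(λᵏ)`, divides `y_k`. If `y_k ≠ 0` then
`λ^{i₀} < λᵏ`, so `ℓ(λᵏ) > ℓ(λ^{i₀}) = deg y_k`, which is impossible; hence `y = 0` by induction.
-/

namespace MvPolynomial

variable {σ R : Type*} [CommRing R]

lemma bind₁_update_X_of_notMem_vars [DecidableEq σ] {i : σ} {p : MvPolynomial σ R}
    (hi : i ∉ p.vars) (v : MvPolynomial σ R) :
    bind₁ (Function.update X i v) p = p := by
  conv_rhs => rw [← AlgHom.id_apply (R := R) p, ← bind₁_X_left]
  refine hom_congr_vars (by ext; simp) (fun j hj _ => ?_) rfl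
  simp [Function.update_of_ne (ne_of_mem_of_not_mem hj hi)]

-- The substitution `X i ↦ X i + p` is an automorphism because `X i` does not occur in `p`.
lemma prime_X_add_of_notMem_vars [IsDomain R] [DecidableEq σ] {i : σ} {p : MvPolynomial σ R}
    (hi : i ∉ p.vars) : Prime (X i + p) := by
  let e : MvPolynomial σ R ≃ₐ[R] MvPolynomial σ R :=
    AlgEquiv.ofAlgHom (bind₁ (Function.update X i (X i + p)))
      (bind₁ (Function.update X i (X i - p)))
      (algHom_ext fun j => by
        rcases eq_or_ne j i with rfl | hj
        · simp [bind₁_update_X_of_notMem_vars hi]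
        · simp [Function.update_of_ne hj])
      (algHom_ext fun j => by
        rcases eq_or_ne j i with rfl | hj
        · simp [bind₁_update_X_of_notMem_vars hi]
        · simp [Function.update_of_ne hj])
  have he : e (X i) = X i + p := by simp [e]
  exact he ▸ (MulEquiv.prime_iff e).mpr X_prime

lemma IsHomogeneous.eq_zero_of_dvd_of_lt [IsDomain R] {P y : MvPolynomial σ R} {L D : ℕ}
    (hP : P.IsHomogeneous L) (hy : y.IsHomogeneous D) (hdvd : P ∣ y) (hDL : D < L) : y = 0 := by
  by_contra hy0
  obtain ⟨g, rfl⟩ := hdvd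
  have hdeg := totalDegree_mul_of_isDomain (left_ne_zero_of_mul hy0) (right_ne_zero_of_mul hy0)
  rw [hy.totalDegree hy0, hP.totalDegree (left_ne_zero_of_mul hy0)] at hdeg
  omega

end MvPolynomial

section ReversalForm

variable {σ R : Type*} [CommRing R] [DecidableEq σ]

/-- The GKM label `Y_{T'} - γ Y_T` of the edge between `T` and `T' = insert b (T.erase B)`. -/
noncomputable def reversalForm (T : Finset σ) (b B : σ) (γ : R) : MvPolynomial σ R :=
  ∑ u ∈ insert b (T.erase B), X u - C γ * ∑ u ∈ T, X u

lemma reversalForm_isHomogeneous (T : Finset σ) (b B : σ) (γ : R) :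
    (reversalForm T b B γ).IsHomogeneous 1 :=
  (IsHomogeneous.sum _ _ _ fun u _ => isHomogeneous_X R u).sub
    ((IsHomogeneous.sum _ _ _ fun u _ => isHomogeneous_X R u).C_mul γ)

lemma prime_reversalForm [IsDomain R] {T : Finset σ} {b : σ} (hb : b ∉ T) (B : σ) (γ : R) :
    Prime (reversalForm T b B γ) := by
  have hbT : b ∉ T.erase B := fun h => hb (Finset.mem_of_mem_erase h)
  have hrest : ∑ u ∈ T.erase B, X u - C γ * ∑ u ∈ T, X u ∈ supported R (T : Set σ) :=
    Subalgebra.sub_mem _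
      (Subalgebra.sum_mem _ fun u hu => X_mem_supported.mpr (Finset.mem_of_mem_erase hu))
      (Subalgebra.mul_mem _ (Subalgebra.algebraMap_mem _ γ)
        (Subalgebra.sum_mem _ fun u hu => X_mem_supported.mpr hu))
  have h : reversalForm T b B γ = X b + (∑ u ∈ T.erase B, X u - C γ * ∑ u ∈ T, X u) := by
    rw [reversalForm, Finset.sum_insert hbT]; ring
  exact h ▸ prime_X_add_of_notMem_vars fun hv => hb (mem_supported.mp hrest hv)

lemma eval_single_reversalForm (T : Finset σ) (b B t : σ) (γ : R) :
    eval (Pi.single t 1) (reversalForm T b B γ)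
      = (if t ∈ insert b (T.erase B) then 1 else 0) - γ * if t ∈ T then 1 else 0 := by
  simp [reversalForm, Finset.sum_pi_single']

lemma reversalForm_not_dvd [IsDomain R] [CharZero R] {T : Finset σ} {b₁ b₂ B₁ B₂ : σ}
    (hb₁ : b₁ ∉ T) (hb₂ : b₂ ∉ T) (hB₁ : B₁ ∈ T) (hB₂ : B₂ ∈ T) (hne : (b₁, B₁) ≠ (b₂, B₂))
    (γ₁ γ₂ : R) : ¬ reversalForm T b₁ B₁ γ₁ ∣ reversalForm T b₂ B₂ γ₂ := by
  -- The forms would differ by a constant unit; evaluating at `b₂` forces `b₁ = b₂` and the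
  -- constant `1`, and then evaluating at `B₁` and `B₂` gives `2 = 0`.
  intro hdvd
  obtain ⟨u, hu⟩ := ((prime_reversalForm hb₁ B₁ γ₁).associated_of_dvd
    (prime_reversalForm hb₂ B₂ γ₂) hdvd)
  obtain ⟨r, -, hr⟩ := isUnit_iff_eq_C_of_isReduced.mp u.isUnit
  have hev : ∀ t, eval (Pi.single t 1) (reversalForm T b₂ B₂ γ₂)
      = eval (Pi.single t 1) (reversalForm T b₁ B₁ γ₁) * r := fun t => by
    rw [← hu, hr, map_mul, eval_C]
  simp only [eval_single_reversalForm, Finset.mem_insert, Finset.mem_erase] at hev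
  have hb : b₂ = b₁ := by
    by_contra h
    simpa [h, hb₂] using hev b₂
  subst hb
  have hB : B₁ ≠ B₂ := fun h => hne (h ▸ rfl)
  have hr1 : r = 1 := by simpa [hb₂] using (hev b₂).symm
  have hB₁b : B₁ ≠ b₂ := ne_of_mem_of_not_mem hB₁ hb₂
  have hB₂b : B₂ ≠ b₂ := ne_of_mem_of_not_mem hB₂ hb₂
  have h₁ : 1 - γ₂ = -γ₁ := by simpa [hr1, hB, hB₁, hB₁b] using hev B₁
  have h₂ : -γ₂ = 1 - γ₁ := by simpa [hr1, hB.symm, hB₂, hB₂b] using hev B₂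
  exact two_ne_zero (α := R) (by linear_combination h₁ - h₂)

lemma prod_reversalForm_dvd [IsDomain R] [UniqueFactorizationMonoid R] [CharZero R]
    {T : Finset σ} {s : Finset (σ × σ)} (hs : ∀ p ∈ s, p.1 ∉ T ∧ p.2 ∈ T) {γ : σ × σ → R}
    {z : MvPolynomial σ R} (h : ∀ p ∈ s, reversalForm T p.1 p.2 (γ p) ∣ z) :
    ∏ p ∈ s, reversalForm T p.1 p.2 (γ p) ∣ z := by
  refine Finset.prod_dvd_of_isRelPrime (fun p hp q hq hpq => ?_) h
  exact (prime_reversalForm (hs p hp).1 p.2 (γ p)).irreducible.isRelPrime_iff_not_dvd.mpr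
    (reversalForm_not_dvd (hs p hp).1 (hs q hq).1 (hs p hp).2 (hs q hq).2 hpq _ _)

end ReversalForm

open Finset

section Reversals

variable {α : Type*} [LinearOrder α]

/-- `(b, B)` stands for the reversal taking the Schubert symbol `T` to `insert b (T.erase B)`. -/
def reversals [Fintype α] (T : Finset α) : Finset (α × α) :=
  (Tᶜ ×ˢ T).filter fun p => p.1 < p.2

@[simp]
lemma mem_reversals [Fintype α] {T : Finset α} {p : α × α} :
    p ∈ reversals T ↔ p.1 ∉ T ∧ p.2 ∈ T ∧ p.1 < p.2 := by
  simp [reversals, and_assoc]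

lemma card_filter_le_le_insert_erase {T : Finset α} {b B : α} (hB : B ∈ T) (hb : b ∉ T)
    (hbB : b < B) (t : α) :
    #(T.filter (· ≤ t)) ≤ #((insert b (T.erase B)).filter (· ≤ t)) := by
  rcases le_or_gt B t with hBt | htB
  · have hbt : b ≤ t := hbB.le.trans hBt
    rw [filter_insert, if_pos hbt, filter_erase, card_insert_of_notMem (by simp [hb]),
      card_erase_of_mem (by simp [hB, hBt])]
    omega
  · refine card_le_card fun u hu => ?_
    rw [mem_filter] at hu ⊢
    exact ⟨mem_insert_of_mem (mem_erase.mpr ⟨(hu.2.trans_lt htB).ne, hu.1⟩), hu.2⟩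

lemma le_of_card_filter_le {d : ℕ} {f g : Fin d → α} (hf : StrictMono f) (hg : StrictMono g)
    (h : ∀ t, #((image g univ).filter (· ≤ t)) ≤ #((image f univ).filter (· ≤ t))) (i : Fin d) :
    f i ≤ g i := by
  -- If `g i < f i`, then up to `g i` there are at least `i + 1` entries of `g`
  -- but at most `i` entries of `f`.
  by_contra! hlt
  have hg' : #(image g (Iic i)) ≤ #((image g univ).filter (· ≤ g i)) :=
    card_le_card fun u hu => by
      obtain ⟨j, hj, rfl⟩ := mem_image.mp hu
      exact mem_filter.mpr ⟨mem_image_of_mem g (mem_univ j), hg.monotone (mem_Iic.mp hj)⟩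
  have hf' : #((image f univ).filter (· ≤ g i)) ≤ #(image f (Iio i)) :=
    card_le_card fun u hu => by
      obtain ⟨hu, hle⟩ := mem_filter.mp hu
      obtain ⟨j, -, rfl⟩ := mem_image.mp hu
      exact mem_image_of_mem f (mem_Iio.mpr (hf.lt_iff_lt.mp (hle.trans_lt hlt)))
  rw [card_image_of_injective _ hg.injective, Fin.card_Iic] at hg'
  rw [card_image_of_injective _ hf.injective, Fin.card_Iio] at hf'
  have := (h (g i)).trans hf'
  omega

end Reversals

section SchubertLength

variable {n d : ℕ}

/-- The length `ℓ(λ) = Σ_q (λ_q - q)` of a Schubert symbol, with `q` counted from `0`. -/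
def schubertLength (f : Fin d → Fin n) : ℕ :=
  ∑ q, ((f q : ℕ) - q)

lemma card_compl_filter_lt_add {g : Fin d → Fin n} (hg : StrictMono g) (q : Fin d) :
    #((image g univ)ᶜ.filter (· < g q)) + q = g q := by
  have hin : (Iio (g q)).filter (· ∈ image g univ) = image g (Iio q) := by
    ext u
    simp only [mem_filter, mem_Iio, mem_image, mem_univ, true_and]
    constructor
    · rintro ⟨hu, j, rfl⟩
      exact ⟨j, hg.lt_iff_lt.mp hu, rfl⟩
    · rintro ⟨j, hj, rfl⟩
      exact ⟨hg hj, j, rfl⟩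
  have hout : (Iio (g q)).filter (· ∉ image g univ) = (image g univ)ᶜ.filter (· < g q) := by
    ext u
    simp only [mem_filter, mem_Iio, mem_compl]
    tauto
  have := card_filter_add_card_filter_not (s := Iio (g q)) (p := (· ∈ image g univ))
  rw [hin, hout, card_image_of_injective _ hg.injective, Fin.card_Iio, Fin.card_Iio] at this
  omega

lemma card_reversals_image {g : Fin d → Fin n} (hg : StrictMono g) :
    #(reversals (image g univ)) = schubertLength g := by
  rw [reversals, schubertLength, card_filter, sum_product_right,
    sum_image fun _ _ _ _ h => hg.injective h]
  refine sum_congr rfl fun q _ => ?_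
  rw [← card_filter]
  have := card_compl_filter_lt_add hg q
  dsimp only
  omega

lemma schubertLength_lt_schubertLength {f g : Fin d → Fin n} (hf : StrictMono f)
    (hle : ∀ q, f q ≤ g q) (hne : f ≠ g) : schubertLength f < schubertLength g := by
  obtain ⟨q₀, hq₀⟩ : ∃ q, f q < g q := by
    by_contra! h
    exact hne (funext fun q => le_antisymm (hle q) (h q))
  refine sum_lt_sum (fun q _ => Nat.sub_le_sub_right (hle q) _) ⟨q₀, mem_univ _, ?_⟩
  have := card_compl_filter_lt_add hf q₀
  have : (f q₀ : ℕ) < g q₀ := hq₀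
  omega

end SchubertLength

section Schubert

variable {n d : ℕ}

lemma exists_lt_image_eq_of_mem_reversals {ι : Type*} [LT ι] {lam : ι → Fin d → Fin n}
    (hmono : ∀ r, StrictMono (lam r)) (henum : ∀ f : Fin d → Fin n, StrictMono f → ∃ r, lam r = f)
    (horder : ∀ r s, (∀ q, lam r q ≤ lam s q) → lam r ≠ lam s → r < s) {k : ι}
    {p : Fin n × Fin n} (hp : p ∈ reversals (image (lam k) univ)) :
    ∃ j, j < k ∧ image (lam j) univ = insert p.1 ((image (lam k) univ).erase p.2) := by
  set T := image (lam k) univ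
  obtain ⟨hb, hB, hbB⟩ := mem_reversals.mp hp
  set S := insert p.1 (T.erase p.2)
  have hS : #S = d := by
    rw [card_insert_of_notMem fun h => hb (mem_of_mem_erase h), card_erase_add_one hB,
      card_image_of_injective _ (hmono k).injective, card_univ, Fintype.card_fin]
  obtain ⟨j, hj⟩ := henum _ (S.orderEmbOfFin hS).strictMono
  have himage : image (lam j) univ = S := hj ▸ image_orderEmbOfFin_univ S hS
  refine ⟨j, horder j k ?_ ?_, himage⟩
  · exact le_of_card_filter_le (hmono j) (hmono k)
      (fun t => himage ▸ card_filter_le_le_insert_erase hB hb hbB t)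
  · intro h
    have hTS : T = S := by rw [← himage, h]
    exact hb (hTS ▸ mem_insert_self _ _)

variable {m : ℕ} {lam : Fin (m + 1) → Fin d → Fin n}

lemma Ypoly_eq_sum_image {r : Fin (m + 1)} (hmono : StrictMono (lam r)) :
    Ypoly n d m lam r = ∑ u ∈ image (lam r) univ, X u :=
  (sum_image fun _ _ _ _ h => hmono.injective h).symm

lemma eq_zero_of_gkm_of_lt_length (hmono : ∀ r, StrictMono (lam r))
    (henum : ∀ f : Fin d → Fin n, StrictMono f → ∃ r, lam r = f)
    (horder : ∀ r s, (∀ q, lam r q ≤ lam s q) → lam r ≠ lam s → r < s)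
    (γ : Fin (m + 1) → Fin (m + 1) → ℤ) (y : Fin (m + 1) → MvPolynomial (Fin n) ℤ)
    (hGKM : ∀ i j, j < i → #(image (lam i) univ ∩ image (lam j) univ) = d - 1 →
      (Ypoly n d m lam j - C (γ j i) * Ypoly n d m lam i) ∣ y i - y j)
    {k : Fin (m + 1)} (hlow : ∀ j < k, y j = 0) {D : ℕ} (hy : (y k).IsHomogeneous D)
    (hD : D < schubertLength (lam k)) : y k = 0 := by
  set T := image (lam k) univ
  choose! nb hnb_lt hnb using fun p (hp : p ∈ reversals T) =>
    exists_lt_image_eq_of_mem_reversals hmono henum horder hp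
  have hmem : ∀ p ∈ reversals T, p.1 ∉ T ∧ p.2 ∈ T := fun p hp =>
    (mem_reversals.mp hp).imp_right And.left
  have hfactor : ∀ p ∈ reversals T, reversalForm T p.1 p.2 (γ (nb p) k) ∣ y k := by
    intro p hp
    have hcard : #(T ∩ image (lam (nb p)) univ) = d - 1 := by
      rw [hnb p hp, inter_insert_of_notMem (hmem p hp).1,
        inter_eq_right.mpr (erase_subset _ _), card_erase_of_mem (hmem p hp).2,
        card_image_of_injective _ (hmono k).injective, card_univ, Fintype.card_fin]
    simpa [hlow _ (hnb_lt p hp), Ypoly_eq_sum_image (hmono _), hnb p hp, reversalForm]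
      using hGKM k (nb p) (hnb_lt p hp) hcard
  have hprod_hom : (∏ p ∈ reversals T, reversalForm T p.1 p.2 (γ (nb p) k)).IsHomogeneous
      #(reversals T) := by
    simpa using IsHomogeneous.prod _ _ (fun _ => 1) fun p _ => reversalForm_isHomogeneous _ _ _ _
  exact hprod_hom.eq_zero_of_dvd_of_lt hy (prod_reversalForm_dvd hmem hfactor)
    (hD.trans_eq (card_reversals_image (hmono k)).symm)

end Schubert

open Classical in
theorem schubert_class_unique_general (n d m : ℕ)
    (lam : Fin (m + 1) → Fin d → Fin n) (hmono : ∀ r, StrictMono (lam r))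
    (henum : ∀ f : Fin d → Fin n, StrictMono f → ∃! r, lam r = f)
    (horder : ∀ r s : Fin (m + 1), (∀ q, lam r q ≤ lam s q) → lam r ≠ lam s → r < s)
    (c : Fin (m + 1) → ℕ)
    (i0 : Fin (m + 1))
    (x x' : Fin (m + 1) → MvPolynomial (Fin n) ℤ)
    -- both tuples satisfy the GKM divisibility conditions:
    (hGKM : ∀ i j : Fin (m + 1), j < i →
      ((Finset.image (lam i) Finset.univ) ∩ (Finset.image (lam j) Finset.univ)).card = d - 1 →
      (Ypoly n d m lam j - C ((c j / c i : ℕ) : ℤ) * Ypoly n d m lam i) ∣ (x i - x j))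
    (hGKM' : ∀ i j : Fin (m + 1), j < i →
      ((Finset.image (lam i) Finset.univ) ∩ (Finset.image (lam j) Finset.univ)).card = d - 1 →
      (Ypoly n d m lam j - C ((c j / c i : ℕ) : ℤ) * Ypoly n d m lam i) ∣ (x' i - x' j))
    -- (1) support above `λ^{i₀}`:
    (hsupp : ∀ k, x k ≠ 0 → ∀ q, lam i0 q ≤ lam k q)
    (hsupp' : ∀ k, x' k ≠ 0 → ∀ q, lam i0 q ≤ lam k q)
    -- (2) restriction at `λ^{i₀}`:
    (hdiag : x i0 = ∏ j ∈ Finset.univ.filter (fun j => inRev n d m lam i0 j),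
      (Ypoly n d m lam j - C ((c j / c i0 : ℕ) : ℤ) * Ypoly n d m lam i0))
    (hdiag' : x' i0 = ∏ j ∈ Finset.univ.filter (fun j => inRev n d m lam i0 j),
      (Ypoly n d m lam j - C ((c j / c i0 : ℕ) : ℤ) * Ypoly n d m lam i0))
    -- (3) homogeneity of degree `ℓ(λ^{i₀})`:
    (hhom : ∀ k, (x k).IsHomogeneous (∑ q, ((lam i0 q : ℕ) - (q : ℕ))))
    (hhom' : ∀ k, (x' k).IsHomogeneous (∑ q, ((lam i0 q : ℕ) - (q : ℕ)))) :
    x = x' := by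
  have hinj : Function.Injective lam := fun r s h => (henum _ (hmono r)).unique rfl h.symm
  have hGKMsub : ∀ i j, j < i →
      #(image (lam i) univ ∩ image (lam j) univ) = d - 1 →
      (Ypoly n d m lam j - C ((c j / c i : ℕ) : ℤ) * Ypoly n d m lam i) ∣
        (x - x') i - (x - x') j := fun i j hji hcard => by
    simpa only [Pi.sub_apply, sub_sub_sub_comm] using
      dvd_sub (hGKM i j hji hcard) (hGKM' i j hji hcard)
  suffices h : ∀ k, (x - x') k = 0 from funext fun k => sub_eq_zero.mp (h k)
  intro k
  induction k using WellFoundedLT.induction with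
  | ind k ih =>
    rcases eq_or_ne k i0 with rfl | hk
    · simp [hdiag, hdiag']
    by_contra hyk
    have habove : ∀ q, lam i0 q ≤ lam k q := by
      by_cases hxk : x k = 0
      · exact hsupp' k fun hx' => hyk (by simp [hxk, hx'])
      · exact hsupp k hxk
    exact hyk (eq_zero_of_gkm_of_lt_length hmono (fun f hf => (henum f hf).exists) horder _ _
      hGKMsub ih ((hhom k).sub (hhom' k))
      (schubertLength_lt_schubertLength (hmono i0) habove fun h => hk (hinj h).symm))

open Classical in
/-- Uniqueness of equivariant Schubert classes: in the integral equivariant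
cohomology of a divisive weighted Grassmann orbifold (realized as tuples
`(f₀,...,f_m)` of polynomials with the GKM divisibility conditions), any two
classes `x, x'` that are supported above `λ^{i₀}`, restrict at `λ^{i₀}` to
`Π_{λʲ ∈ R(λ^{i₀})} (Y_{λʲ} - (cⱼ/c_{i₀}) Y_{λ^{i₀}})`, and have all
restrictions homogeneous of degree `ℓ(λ^{i₀})`, are equal. -/
theorem schubert_class_unique (n d a m : ℕ) (hd : 0 < d) (hdn : d < n) (ha : 0 < a)
    (W : Fin n → ℕ)
    (lam : Fin (m + 1) → Fin d → Fin n) (hmono : ∀ r, StrictMono (lam r))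
    (henum : ∀ f : Fin d → Fin n, StrictMono f → ∃! r, lam r = f)
    (horder : ∀ r s : Fin (m + 1), (∀ q, lam r q ≤ lam s q) → lam r ≠ lam s → r < s)
    (c : Fin (m + 1) → ℕ) (hc : ∀ r, c r = a + ∑ q, W (lam r q))
    (hdiv : ∀ r : Fin m, c r.succ ∣ c r.castSucc)
    (i0 : Fin (m + 1))
    (x x' : Fin (m + 1) → MvPolynomial (Fin n) ℤ)
    -- both tuples satisfy the GKM divisibility conditions:
    (hGKM : ∀ i j : Fin (m + 1), j < i →
      ((Finset.image (lam i) Finset.univ) ∩ (Finset.image (lam j) Finset.univ)).card = d - 1 →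
      (Ypoly n d m lam j - C ((c j / c i : ℕ) : ℤ) * Ypoly n d m lam i) ∣ (x i - x j))
    (hGKM' : ∀ i j : Fin (m + 1), j < i →
      ((Finset.image (lam i) Finset.univ) ∩ (Finset.image (lam j) Finset.univ)).card = d - 1 →
      (Ypoly n d m lam j - C ((c j / c i : ℕ) : ℤ) * Ypoly n d m lam i) ∣ (x' i - x' j))
    -- (1) support above `λ^{i₀}`:
    (hsupp : ∀ k, x k ≠ 0 → ∀ q, lam i0 q ≤ lam k q)
    (hsupp' : ∀ k, x' k ≠ 0 → ∀ q, lam i0 q ≤ lam k q)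
    -- (2) restriction at `λ^{i₀}`:
    (hdiag : x i0 = ∏ j ∈ Finset.univ.filter (fun j => inRev n d m lam i0 j),
      (Ypoly n d m lam j - C ((c j / c i0 : ℕ) : ℤ) * Ypoly n d m lam i0))
    (hdiag' : x' i0 = ∏ j ∈ Finset.univ.filter (fun j => inRev n d m lam i0 j),
      (Ypoly n d m lam j - C ((c j / c i0 : ℕ) : ℤ) * Ypoly n d m lam i0))
    -- (3) homogeneity of degree `ℓ(λ^{i₀})`:
    (hhom : ∀ k, (x k).IsHomogeneous (∑ q, ((lam i0 q : ℕ) - (q : ℕ))))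
    (hhom' : ∀ k, (x' k).IsHomogeneous (∑ q, ((lam i0 q : ℕ) - (q : ℕ)))) :
    x = x' :=
  schubert_class_unique_general n d m lam hmono henum horder c i0 x x' hGKM hGKM' hsupp hsupp' hdiag
    hdiag' hhom hhom'
end
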